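/- arXiv:1410.0563 — 3 statements merged into one kernel-verified Lean document; each statement's English description precedes it below -/
import Mathlib

section
/- Let D be a nonempty open connected subset of the quaternions ℍ and let f : D → ℍ. If for every q ∈ D the limit lim_{h→0, h≠0} (f(q+h) − f(q)) h⁻¹ exists in ℍ (the limit taken along the punctured neighborhood filter of 0 in ℍ), then f is a left-affine function: there exist ω, λ ∈ ℍ such that f(q) = ωq + λ for all q ∈ D. -/
/-!
Write `f'(q) h = L q * h`. Make `ℍ` a complex vector space through right multiplication by
`ℂ_u = ℝ + ℝu` (`u ∈ {i, j, k}`). Then on every slice `x + a ℂ_u` the restriction of `f` is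
holomorphic, with complex derivative `L · a`, so `L · a` is holomorphic on the slice too. For the
directional derivatives of `L` this gives Cauchy–Riemann relations. Taken on three slices, they
force `∂₁L = ∂ᵢL = 0`. Hence `L` has zero complex derivative in both factors of
`ℍ = ℂ_j ⊕ i ℂ_j`. So `L` is differentiable with derivative zero, and it is a constant `ω` on the
connected set `D`. Finally `f - ω ·` has zero derivative on `D`.
-/

open scoped Quaternion Topology
open Filter

theorem hasFDerivAt_of_tendsto_sub_mul_inv {A : Type*} [NormedDivisionRing A] [NormedAlgebra ℝ A]
    {f : A → A} {q L : A} (h : Tendsto (fun h => (f (q + h) - f q) * h⁻¹) (𝓝[≠] 0) (𝓝 L)) :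
    HasFDerivAt f (ContinuousLinearMap.mul ℝ A L) q := by
  rw [hasFDerivAt_iff_isLittleO_nhds_zero, Asymptotics.isLittleO_iff]
  intro c hc
  filter_upwards [eventually_nhdsWithin_iff.mp (Metric.tendsto_nhds.mp h c hc)] with x hx
  rcases eq_or_ne x 0 with rfl | hx0
  · simp
  have key : f (q + x) - f q - L * x = ((f (q + x) - f q) * x⁻¹ - L) * x := by
    rw [sub_mul, mul_assoc, inv_mul_cancel₀ hx0, mul_one]
  simpa [key, norm_mul, dist_eq_norm] using
    mul_le_mul_of_nonneg_right (hx hx0).le (norm_nonneg x)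

section Slice

variable {A X : Type*} [NormedRing A] [NormedAlgebra ℝ A]

noncomputable def complexLine (u : A) : ℂ →L[ℝ] A :=
  Complex.reCLM.smulRight 1 + Complex.imCLM.smulRight u

theorem complexLine_apply (u : A) (z : ℂ) : complexLine u z = z.re • (1 : A) + z.im • u := by
  simp [complexLine]

@[simp]
theorem complexLine_one (u : A) : complexLine u 1 = 1 := by
  simp [complexLine_apply]

@[simp]
theorem complexLine_I (u : A) : complexLine u Complex.I = u := by
  simp [complexLine_apply]

variable [NormedAddCommGroup X] [NormedSpace ℂ X] [NormedSpace ℝ X] [IsScalarTower ℝ ℂ X]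
  {u : A} {D : Set A} {f L : A → A}

theorem hasDerivAt_comp_slice {E : A →L[ℝ] X} (hE : ∀ p z, E (p * complexLine u z) = z • E p)
    {x a : A} {w : ℂ}
    (hf : HasFDerivAt f (ContinuousLinearMap.mul ℝ A (L (x + a * complexLine u w)))
      (x + a * complexLine u w)) :
    HasDerivAt (fun w => E (f (x + a * complexLine u w))) (E (L (x + a * complexLine u w) * a))
      w := by
  have hline : HasFDerivAt (fun w : ℂ => x + a * complexLine u w)
      ((ContinuousLinearMap.mul ℝ A a).comp (complexLine u)) w :=
    ((ContinuousLinearMap.mul ℝ A a).comp (complexLine u)).hasFDerivAt.const_add x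
  have hC : HasFDerivAt (fun w => E (f (x + a * complexLine u w)))
      (ContinuousLinearMap.toSpanSingleton ℂ (E (L (x + a * complexLine u w) * a))) w := by
    refine hasFDerivAt_of_restrictScalars ℝ (E.hasFDerivAt.comp w (hf.comp w hline)) ?_
    ext z
    simp [← hE, mul_assoc]
  simpa using hC.hasDerivAt

theorem differentiableAt_slice_deriv [CompleteSpace X] (hD : IsOpen D) {E : A →L[ℝ] X}
    (hE : ∀ p z, E (p * complexLine u z) = z • E p)
    (hf : ∀ q ∈ D, HasFDerivAt f (ContinuousLinearMap.mul ℝ A (L q)) q) {x a : A} {w : ℂ}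
    (hw : x + a * complexLine u w ∈ D) :
    DifferentiableAt ℂ (fun w => E (L (x + a * complexLine u w) * a)) w := by
  set Ω := {w | x + a * complexLine u w ∈ D}
  have hΩ : IsOpen Ω := hD.preimage (by fun_prop)
  have hF : ∀ w ∈ Ω, HasDerivAt
      (fun w => E (f (x + a * complexLine u w))) (E (L (x + a * complexLine u w) * a)) w :=
    fun w hw => hasDerivAt_comp_slice hE (hf _ hw)
  have hFhol : DifferentiableOn ℂ (fun w => E (f (x + a * complexLine u w))) Ω :=
    fun w hw => (hF w hw).differentiableAt.differentiableWithinAt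
  exact ((hFhol.analyticOnNhd hΩ).deriv.differentiableOn.congr fun w hw =>
    (hF w hw).deriv.symm).differentiableAt (hΩ.mem_nhds hw)

theorem HasFDerivAt.hasDerivAt_slice_line {Y : Type*} [NormedAddCommGroup Y] [NormedSpace ℝ Y]
    {g : A → Y} {Λ : ℂ →L[ℝ] Y} {x a : A} {w : ℂ}
    (h : HasFDerivAt (fun w => g (x + a * complexLine u w)) Λ w) (c : ℂ) :
    HasDerivAt (fun t : ℝ => g (x + a * complexLine u w + t • (a * complexLine u c))) (Λ c) 0 := by
  have hγ : HasDerivAt (fun t : ℝ => w + t • c) c 0 := by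
    simpa using ((hasDerivAt_id (0 : ℝ)).smul_const c).const_add w
  convert h.comp_hasDerivAt_of_eq (0 : ℝ) hγ (by simp) using 3 with t
  simp only [Function.comp_apply, map_add, map_smul, mul_add, mul_smul_comm, add_assoc]

end Slice

section DivisionAlgebraSlice

variable {A X : Type*} [NormedDivisionRing A] [NormedAlgebra ℝ A]
  [NormedAddCommGroup X] [NormedSpace ℂ X] [NormedSpace ℝ X] [IsScalarTower ℝ ℂ X] [CompleteSpace X]
  {u : A} {D : Set A} {f L : A → A} {E : A ≃L[ℝ] X}

theorem exists_hasFDerivAt_slice_mul (hD : IsOpen D)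
    (hE : ∀ p z, E (p * complexLine u z) = z • E p)
    (hf : ∀ q ∈ D, HasFDerivAt f (ContinuousLinearMap.mul ℝ A (L q)) q) {x a : A} {w : ℂ}
    (hw : x + a * complexLine u w ∈ D) :
    ∃ P : A, HasFDerivAt (fun w => L (x + a * complexLine u w) * a)
      ((ContinuousLinearMap.mul ℝ A P).comp (complexLine u)) w := by
  have hG := differentiableAt_slice_deriv (E := (E : A →L[ℝ] X)) hD hE hf hw
  refine ⟨E.symm (deriv (fun w => E (L (x + a * complexLine u w) * a)) w), ?_⟩
  have hcomp := (E.symm : X →L[ℝ] A).hasFDerivAt.comp w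
    (hG.hasDerivAt.hasFDerivAt.restrictScalars ℝ)
  simp only [Function.comp_def, ContinuousLinearEquiv.coe_coe,
    ContinuousLinearEquiv.symm_apply_apply] at hcomp
  refine hcomp.congr_fderiv ?_
  ext z
  apply E.injective
  simp [hE]

theorem exists_hasDerivAt_slice_mul (hD : IsOpen D)
    (hE : ∀ p z, E (p * complexLine u z) = z • E p)
    (hf : ∀ q ∈ D, HasFDerivAt f (ContinuousLinearMap.mul ℝ A (L q)) q) {x : A} (hx : x ∈ D)
    (a : A) :
    ∃ P : A, HasDerivAt (fun t : ℝ => L (x + t • a) * a) P 0 ∧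
      HasDerivAt (fun t : ℝ => L (x + t • (a * u)) * a) (P * u) 0 := by
  obtain ⟨P, hP⟩ := exists_hasFDerivAt_slice_mul (w := 0) (a := a) hD hE hf (by simpa using hx)
  exact ⟨P, by simpa using hP.hasDerivAt_slice_line (g := fun q => L q * a) 1,
    by simpa using hP.hasDerivAt_slice_line (g := fun q => L q * a) Complex.I⟩

theorem hasFDerivAt_slice_eq_zero (hD : IsOpen D)
    (hE : ∀ p z, E (p * complexLine u z) = z • E p)
    (hf : ∀ q ∈ D, HasFDerivAt f (ContinuousLinearMap.mul ℝ A (L q)) q) {a : A} (ha : a ≠ 0)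
    (h0 : ∀ y ∈ D, HasDerivAt (fun t : ℝ => L (y + t • a)) 0 0) {x : A} {w : ℂ}
    (hw : x + a * complexLine u w ∈ D) :
    HasFDerivAt (fun w => L (x + a * complexLine u w)) (0 : ℂ →L[ℝ] A) w := by
  obtain ⟨P, hP⟩ := exists_hasFDerivAt_slice_mul hD hE hf hw
  obtain rfl : P = 0 := by
    have hline := hP.hasDerivAt_slice_line (g := fun q => L q * a) 1
    rw [complexLine_one, mul_one] at hline
    simpa using hline.unique ((h0 _ hw).mul_const a)
  simpa [Function.comp_def, mul_assoc, mul_inv_cancel₀ ha] using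
    ((ContinuousLinearMap.mul ℝ A).flip a⁻¹).hasFDerivAt.comp w hP

end DivisionAlgebraSlice

theorem hasFDerivAt_zero_of_partial_zero {𝕜 E₁ E₂ F : Type*} [NontriviallyNormedField 𝕜]
    [IsRCLikeNormedField 𝕜] [NormedAddCommGroup E₁] [NormedSpace 𝕜 E₁] [NormedAddCommGroup E₂]
    [NormedSpace 𝕜 E₂] [NormedAddCommGroup F] [NormedSpace 𝕜 F] {g : E₁ × E₂ → F}
    {U : Set (E₁ × E₂)} (hU : IsOpen U)
    (h₁ : ∀ z ∈ U, HasFDerivAt (fun w => g (w, z.2)) (0 : E₁ →L[𝕜] F) z.1)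
    (h₂ : ∀ z ∈ U, HasFDerivAt (fun w => g (z.1, w)) (0 : E₂ →L[𝕜] F) z.2) {z : E₁ × E₂}
    (hz : z ∈ U) : HasFDerivAt g (0 : E₁ × E₂ →L[𝕜] F) z := by
  have := hasStrictFDerivAt_uncurry_coprod (f := fun a b => g (a, b)) (f₁ := fun _ _ => 0)
    (f₂ := fun _ _ => 0) (Filter.eventually_of_mem (hU.mem_nhds hz) h₁)
    (Filter.eventually_of_mem (hU.mem_nhds hz) h₂) continuousAt_const continuousAt_const
  exact this.hasFDerivAt.congr_fderiv (by ext <;> simp [Function.HasUncurry.uncurry])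

namespace Quaternion

def i : ℍ[ℝ] := ⟨0, 1, 0, 0⟩
def j : ℍ[ℝ] := ⟨0, 0, 1, 0⟩
def k : ℍ[ℝ] := ⟨0, 0, 0, 1⟩

@[simp] theorem i_re : i.re = 0 := rfl
@[simp] theorem i_imI : i.imI = 1 := rfl
@[simp] theorem i_imJ : i.imJ = 0 := rfl
@[simp] theorem i_imK : i.imK = 0 := rfl
@[simp] theorem j_re : j.re = 0 := rfl
@[simp] theorem j_imI : j.imI = 0 := rfl
@[simp] theorem j_imJ : j.imJ = 1 := rfl
@[simp] theorem j_imK : j.imK = 0 := rfl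
@[simp] theorem k_re : k.re = 0 := rfl
@[simp] theorem k_imI : k.imI = 0 := rfl
@[simp] theorem k_imJ : k.imJ = 0 := rfl
@[simp] theorem k_imK : k.imK = 1 := rfl

theorem i_mul_j : i * j = k := by ext <;> simp [re_mul, imI_mul, imJ_mul, imK_mul]
theorem i_mul_k : i * k = -j := by ext <;> simp [re_mul, imI_mul, imJ_mul, imK_mul]
theorem k_mul_i : k * i = j := by ext <;> simp [re_mul, imI_mul, imJ_mul, imK_mul]
theorem i_ne_zero : i ≠ 0 := fun h => by simpa using congrArg QuaternionAlgebra.imI h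
theorem j_ne_zero : j ≠ 0 := fun h => by simpa using congrArg QuaternionAlgebra.imJ h

/- Coordinates of `ℍ = ℂ_u ⊕ v ℂ_u` as a right `ℂ_u`-module, `p = z₁ + v z₂`, for
`(u, v) = (i, j), (j, i), (k, i)`. -/

noncomputable def equivComplexProdI : ℍ[ℝ] ≃L[ℝ] ℂ × ℂ :=
  LinearEquiv.toContinuousLinearEquiv
    { toFun := fun p => (⟨p.re, p.imI⟩, ⟨p.imJ, -p.imK⟩)
      invFun := fun z => ⟨z.1.re, z.1.im, z.2.re, -z.2.im⟩
      map_add' := fun p q => by simp [Prod.ext_iff, Complex.ext_iff, add_comm]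
      map_smul' := fun r p => by simp [Prod.ext_iff, Complex.ext_iff]
      left_inv := fun p => by ext <;> simp
      right_inv := fun z => by simp }

noncomputable def equivComplexProdJ : ℍ[ℝ] ≃L[ℝ] ℂ × ℂ :=
  LinearEquiv.toContinuousLinearEquiv
    { toFun := fun p => (⟨p.re, p.imJ⟩, ⟨p.imI, p.imK⟩)
      invFun := fun z => ⟨z.1.re, z.2.re, z.1.im, z.2.im⟩
      map_add' := fun p q => by simp [Prod.ext_iff, Complex.ext_iff]
      map_smul' := fun r p => by simp [Prod.ext_iff, Complex.ext_iff]
      left_inv := fun p => by ext <;> simp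
      right_inv := fun z => by simp }

noncomputable def equivComplexProdK : ℍ[ℝ] ≃L[ℝ] ℂ × ℂ :=
  LinearEquiv.toContinuousLinearEquiv
    { toFun := fun p => (⟨p.re, p.imK⟩, ⟨p.imI, -p.imJ⟩)
      invFun := fun z => ⟨z.1.re, z.2.re, -z.2.im, z.1.im⟩
      map_add' := fun p q => by simp [Prod.ext_iff, Complex.ext_iff, add_comm]
      map_smul' := fun r p => by simp [Prod.ext_iff, Complex.ext_iff]
      left_inv := fun p => by ext <;> simp
      right_inv := fun z => by simp }

theorem equivComplexProdI_apply (p : ℍ[ℝ]) :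
    equivComplexProdI p = (⟨p.re, p.imI⟩, ⟨p.imJ, -p.imK⟩) := rfl

theorem equivComplexProdJ_apply (p : ℍ[ℝ]) :
    equivComplexProdJ p = (⟨p.re, p.imJ⟩, ⟨p.imI, p.imK⟩) := rfl

theorem equivComplexProdK_apply (p : ℍ[ℝ]) :
    equivComplexProdK p = (⟨p.re, p.imK⟩, ⟨p.imI, -p.imJ⟩) := rfl

theorem equivComplexProdI_mul_complexLine (p : ℍ[ℝ]) (z : ℂ) :
    equivComplexProdI (p * complexLine i z) = z • equivComplexProdI p := by
  simp [equivComplexProdI_apply, complexLine_apply, Prod.ext_iff, Complex.ext_iff, re_mul,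
    imI_mul, imJ_mul, imK_mul]
  constructor <;> constructor <;> ring

theorem equivComplexProdJ_mul_complexLine (p : ℍ[ℝ]) (z : ℂ) :
    equivComplexProdJ (p * complexLine j z) = z • equivComplexProdJ p := by
  simp [equivComplexProdJ_apply, complexLine_apply, Prod.ext_iff, Complex.ext_iff, re_mul,
    imI_mul, imJ_mul, imK_mul]
  constructor <;> constructor <;> ring

theorem equivComplexProdK_mul_complexLine (p : ℍ[ℝ]) (z : ℂ) :
    equivComplexProdK (p * complexLine k z) = z • equivComplexProdK p := by
  simp [equivComplexProdK_apply, complexLine_apply, Prod.ext_iff, Complex.ext_iff, re_mul,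
    imI_mul, imJ_mul, imK_mul]
  constructor <;> constructor <;> ring

theorem equivComplexProdJ_symm_apply (z : ℂ × ℂ) :
    equivComplexProdJ.symm z = complexLine j z.1 + i * complexLine j z.2 := by
  apply equivComplexProdJ.injective
  simp [equivComplexProdJ_apply, complexLine_apply, re_mul, imI_mul, imJ_mul, imK_mul]

variable {D : Set ℍ[ℝ]} {f L : ℍ[ℝ] → ℍ[ℝ]}

theorem hasDerivAt_line_one_and_i_eq_zero (hD : IsOpen D)
    (hf : ∀ q ∈ D, HasFDerivAt f (ContinuousLinearMap.mul ℝ ℍ[ℝ] (L q)) q) {x : ℍ[ℝ]}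
    (hx : x ∈ D) :
    HasDerivAt (fun t : ℝ => L (x + t • 1)) 0 0 ∧ HasDerivAt (fun t : ℝ => L (x + t • i)) 0 0 := by
  -- Cauchy–Riemann on the slices `x + ℂ_i`, `x + ℂ_k`, `x + i ℂ_j`:
  -- `∂ᵢL = ∂₁L i`, `∂ₖL = ∂₁L k` and `∂ₖL i = ∂ᵢL i j`, whence `∂₁L j = -∂₁L j`.
  obtain ⟨P, hP₁, hPi⟩ := exists_hasDerivAt_slice_mul hD equivComplexProdI_mul_complexLine hf hx 1
  obtain ⟨Q, hQ₁, hQk⟩ := exists_hasDerivAt_slice_mul hD equivComplexProdK_mul_complexLine hf hx 1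
  obtain ⟨R, hRi, hRk⟩ := exists_hasDerivAt_slice_mul hD equivComplexProdJ_mul_complexLine hf hx i
  simp only [one_mul, mul_one, i_mul_j] at hP₁ hPi hQ₁ hQk hRk
  have hQP : Q = P := hQ₁.unique hP₁
  have hR : R = P * i * i := hRi.unique (hPi.mul_const i)
  have hRQ : R * j = Q * k * i := hRk.unique (hQk.mul_const i)
  obtain rfl : P = 0 := by
    rw [hQP, hR] at hRQ
    simp only [mul_assoc, i_mul_j, i_mul_k, k_mul_i, mul_neg] at hRQ
    have h2 : (2 : ℝ) • (P * j) = 0 := by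
      rw [two_smul]
      nth_rw 1 [← hRQ]
      exact neg_add_cancel _
    exact (mul_eq_zero.mp ((smul_eq_zero.mp h2).resolve_left two_ne_zero)).resolve_right j_ne_zero
  simpa using And.intro hP₁ hPi

theorem exists_eq_const_of_hasFDerivAt_mul (hD : IsOpen D) (hDc : IsPreconnected D)
    (hf : ∀ q ∈ D, HasFDerivAt f (ContinuousLinearMap.mul ℝ ℍ[ℝ] (L q)) q) :
    ∃ ω, ∀ q ∈ D, L q = ω := by
  have h₁ := fun y (hy : y ∈ D) => (hasDerivAt_line_one_and_i_eq_zero hD hf hy).1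
  have hᵢ := fun y (hy : y ∈ D) => (hasDerivAt_line_one_and_i_eq_zero hD hf hy).2
  have hLΦ : ∀ z ∈ equivComplexProdJ.symm ⁻¹' D,
      HasFDerivAt (L ∘ equivComplexProdJ.symm) (0 : ℂ × ℂ →L[ℝ] ℍ[ℝ]) z := by
    refine fun z hz => hasFDerivAt_zero_of_partial_zero
      (hD.preimage equivComplexProdJ.symm.continuous) (fun z hz => ?_) (fun z hz => ?_) hz
    · simpa [equivComplexProdJ_symm_apply, add_comm] using
        hasFDerivAt_slice_eq_zero hD equivComplexProdJ_mul_complexLine hf one_ne_zero h₁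
          (x := i * complexLine j z.2) (by simpa [equivComplexProdJ_symm_apply, add_comm] using hz)
    · simpa [equivComplexProdJ_symm_apply] using
        hasFDerivAt_slice_eq_zero hD equivComplexProdJ_mul_complexLine hf i_ne_zero hᵢ
          (x := complexLine j z.1) (by simpa [equivComplexProdJ_symm_apply] using hz)
  have hL : ∀ q ∈ D, HasFDerivAt L (0 : ℍ[ℝ] →L[ℝ] ℍ[ℝ]) q := fun q hq => by
    simpa [Function.comp_def] using
      (hLΦ _ (by simpa using hq)).comp q equivComplexProdJ.symm.symm.hasFDerivAt
  exact hD.exists_is_const_of_fderiv_eq_zero hDc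
    (fun q hq => (hL q hq).differentiableAt.differentiableWithinAt) fun q hq => (hL q hq).fderiv

end Quaternion

/-- **Left quaternion differentiability forces left-affine form.**
If `D ⊆ ℍ` is a nonempty open connected set and for every `q ∈ D` the limit
`lim_{h→0, h≠0} (f(q+h) − f(q)) h⁻¹` exists, then `f(q) = ω q + λ` on `D`. -/
theorem left_quaternion_differentiable_is_affine
    (D : Set ℍ[ℝ]) (hD_open : IsOpen D) (hD_conn : IsConnected D)
    (f : ℍ[ℝ] → ℍ[ℝ])
    (hf : ∀ q ∈ D, ∃ L : ℍ[ℝ],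
      Filter.Tendsto (fun h : ℍ[ℝ] => (f (q + h) - f q) * h⁻¹)
        (nhdsWithin (0 : ℍ[ℝ]) {(0 : ℍ[ℝ])}ᶜ) (nhds L)) :
    ∃ ω lambda : ℍ[ℝ], ∀ q ∈ D, f q = ω * q + lambda := by
  choose! L hL using hf
  have hfL : ∀ q ∈ D, HasFDerivAt f (ContinuousLinearMap.mul ℝ ℍ[ℝ] (L q)) q :=
    fun q hq => hasFDerivAt_of_tendsto_sub_mul_inv (hL q hq)
  obtain ⟨ω, hω⟩ :=
    Quaternion.exists_eq_const_of_hasFDerivAt_mul hD_open hD_conn.isPreconnected hfL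
  obtain ⟨c, hc⟩ := hD_open.exists_eq_add_of_fderiv_eq hD_conn.isPreconnected
    (fun q hq => (hfL q hq).differentiableAt.differentiableWithinAt)
    (ContinuousLinearMap.mul ℝ ℍ[ℝ] ω).differentiable.differentiableOn
    (fun q hq => by rw [(hfL q hq).fderiv, hω q hq, ContinuousLinearMap.fderiv])
  exact ⟨ω, c, fun q hq => hc hq⟩
end

section
/- Let A₁, A₂, A₃, A₄ be M × NS quaternion matrices (with columns indexed by the entry positions (n,s) of an N × S quaternion matrix). If A₁·vec(Q) + A₂·vec(Q^i) + A₃·vec(Q^j) + A₄·vec(Q^k) = 0 for every Q ∈ ℍ^{N×S}, then A₁ = A₂ = A₃ = A₄ = 0. Likewise, if A₁·vec(Q*) + A₂·vec(Q^{i*}) + A₃·vec(Q^{j*}) + A₄·vec(Q^{k*}) = 0 for every Q ∈ ℍ^{N×S}, then A₁ = A₂ = A₃ = A₄ = 0. -/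
/-!
Putting a single nonzero entry `q` into `Q` reduces the hypothesis to the scalar identity
`a q + b q^i + c q^j + d q^k = 0` for all `q`, with `a, b, c, d` the corresponding entries of
`A₁, …, A₄`. The involutions fix `1`, each `η ∈ {i, j, k}` is fixed by `·^η` and negated by the
other two, so `q = 1, i, j, k` yields a Hadamard system forcing `a = b = c = d = 0`.
Conjugation commutes with every `·^η` and is bijective, so the conjugate case is the first one
applied to `Q*`.
-/

open scoped Quaternion

noncomputable section

/-- The imaginary unit `i` of the quaternions. -/
def qI : ℍ[ℝ] := ⟨0, 1, 0, 0⟩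
/-- The imaginary unit `j` of the quaternions. -/
def qJ : ℍ[ℝ] := ⟨0, 0, 1, 0⟩
/-- The imaginary unit `k` of the quaternions. -/
def qK : ℍ[ℝ] := ⟨0, 0, 0, 1⟩

/-- The quaternion involution `q^η = −η q η` (for a pure unit quaternion `η`). -/
def invo (η q : ℍ[ℝ]) : ℍ[ℝ] := -(η * q * η)

/-- Entrywise involution of an `N × S` quaternion matrix. -/
def entryInvo {N S : ℕ} (η : ℍ[ℝ]) (Q : Fin N → Fin S → ℍ[ℝ]) : Fin N → Fin S → ℍ[ℝ] :=
  fun n s => invo η (Q n s)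

/-- Entrywise quaternion conjugation of a matrix. -/
def entryStar {N S : ℕ} (Q : Fin N → Fin S → ℍ[ℝ]) : Fin N → Fin S → ℍ[ℝ] :=
  fun n s => star (Q n s)

/-- `vec` of an `N × S` quaternion matrix: the vector of its entries, indexed by pairs `(n,s)`. -/
def vecM {N S : ℕ} (Q : Fin N → Fin S → ℍ[ℝ]) : Fin N × Fin S → ℍ[ℝ] :=
  fun p => Q p.1 p.2

lemma qI_mul_qI : qI * qI = -1 := by ext <;> (simp; simp [qI])
lemma qJ_mul_qJ : qJ * qJ = -1 := by ext <;> (simp; simp [qJ])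
lemma qK_mul_qK : qK * qK = -1 := by ext <;> (simp; simp [qK])
lemma qI_mul_qJ : qI * qJ = -(qJ * qI) := by ext <;> (simp; simp [qI, qJ])
lemma qJ_mul_qI : qJ * qI = -(qI * qJ) := by ext <;> (simp; simp [qI, qJ])
lemma qI_mul_qK : qI * qK = -(qK * qI) := by ext <;> (simp; simp [qI, qK])
lemma qK_mul_qI : qK * qI = -(qI * qK) := by ext <;> (simp; simp [qI, qK])
lemma qJ_mul_qK : qJ * qK = -(qK * qJ) := by ext <;> (simp; simp [qJ, qK])
lemma qK_mul_qJ : qK * qJ = -(qJ * qK) := by ext <;> (simp; simp [qJ, qK])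
lemma star_qI : star qI = -qI := Quaternion.star_eq_neg.mpr rfl
lemma star_qJ : star qJ = -qJ := Quaternion.star_eq_neg.mpr rfl
lemma star_qK : star qK = -qK := Quaternion.star_eq_neg.mpr rfl

section Involution

variable {η ξ : ℍ[ℝ]}

lemma ne_zero_of_mul_self_eq_neg_one (hη : η * η = -1) : η ≠ 0 := by
  rintro rfl
  simp at hη

lemma invo_zero (η : ℍ[ℝ]) : invo η 0 = 0 := by simp [invo]

lemma invo_one (hη : η * η = -1) : invo η 1 = 1 := by simp [invo, hη]

lemma invo_self (hη : η * η = -1) : invo η η = η := by simp [invo, hη]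

lemma invo_of_anticomm (hη : η * η = -1) (h : η * ξ = -(ξ * η)) : invo η ξ = -ξ := by
  rw [invo, h, neg_mul, mul_assoc, hη]
  simp

lemma star_invo (hη : star η = -η) (q : ℍ[ℝ]) : star (invo η q) = invo η (star q) := by
  simp [invo, hη, mul_assoc]

end Involution

theorem eq_zero_of_forall_invo_combination {a b c d : ℍ[ℝ]}
    (h : ∀ q, a * q + b * invo qI q + c * invo qJ q + d * invo qK q = 0) :
    a = 0 ∧ b = 0 ∧ c = 0 ∧ d = 0 := by
  have e₁ : a + b + c + d = 0 := by
    simpa [invo_one qI_mul_qI, invo_one qJ_mul_qJ, invo_one qK_mul_qK] using h 1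
  have eI : a + b - c - d = 0 := by
    refine (mul_eq_zero_iff_right (ne_zero_of_mul_self_eq_neg_one qI_mul_qI)).mp ?_
    rw [← h qI, invo_self qI_mul_qI, invo_of_anticomm qJ_mul_qJ qJ_mul_qI,
      invo_of_anticomm qK_mul_qK qK_mul_qI]
    noncomm_ring
  have eJ : a - b + c - d = 0 := by
    refine (mul_eq_zero_iff_right (ne_zero_of_mul_self_eq_neg_one qJ_mul_qJ)).mp ?_
    rw [← h qJ, invo_self qJ_mul_qJ, invo_of_anticomm qI_mul_qI qI_mul_qJ,
      invo_of_anticomm qK_mul_qK qK_mul_qJ]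
    noncomm_ring
  have eK : a - b - c + d = 0 := by
    refine (mul_eq_zero_iff_right (ne_zero_of_mul_self_eq_neg_one qK_mul_qK)).mp ?_
    rw [← h qK, invo_self qK_mul_qK, invo_of_anticomm qI_mul_qI qI_mul_qK,
      invo_of_anticomm qJ_mul_qJ qJ_mul_qK]
    noncomm_ring
  refine ⟨?_, ?_, ?_, ?_⟩
  · linear_combination (norm := module) (4⁻¹ : ℝ) • (e₁ + eI + eJ + eK)
  · linear_combination (norm := module) (4⁻¹ : ℝ) • (e₁ + eI - eJ - eK)
  · linear_combination (norm := module) (4⁻¹ : ℝ) • (e₁ - eI + eJ - eK)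
  · linear_combination (norm := module) (4⁻¹ : ℝ) • (e₁ - eI - eJ + eK)

lemma vecM_curry {N S : ℕ} (v : Fin N × Fin S → ℍ[ℝ]) : vecM (Function.curry v) = v := rfl

lemma vecM_entryInvo_curry_single {N S : ℕ} (η : ℍ[ℝ]) (p : Fin N × Fin S) (q : ℍ[ℝ]) :
    vecM (entryInvo η (Function.curry (Pi.single p q))) = Pi.single p (invo η q) :=
  funext fun x => Pi.apply_single (fun _ => invo η) (fun _ => invo_zero η) p q x

theorem involutions_independent {M N S : ℕ} {A₁ A₂ A₃ A₄ : Matrix (Fin M) (Fin N × Fin S) ℍ[ℝ]}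
    (h : ∀ Q : Fin N → Fin S → ℍ[ℝ],
      A₁.mulVec (vecM Q) + A₂.mulVec (vecM (entryInvo qI Q))
        + A₃.mulVec (vecM (entryInvo qJ Q)) + A₄.mulVec (vecM (entryInvo qK Q)) = 0) :
    A₁ = 0 ∧ A₂ = 0 ∧ A₃ = 0 ∧ A₄ = 0 := by
  have entry (m p) : A₁ m p = 0 ∧ A₂ m p = 0 ∧ A₃ m p = 0 ∧ A₄ m p = 0 :=
    eq_zero_of_forall_invo_combination fun q => by
      have hpq := congrFun (h (Function.curry (Pi.single p q))) m
      simp only [vecM_curry, vecM_entryInvo_curry_single, Matrix.mulVec_single] at hpq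
      simpa using hpq
  exact ⟨Matrix.ext fun m p => (entry m p).1, Matrix.ext fun m p => (entry m p).2.1,
    Matrix.ext fun m p => (entry m p).2.2.1, Matrix.ext fun m p => (entry m p).2.2.2⟩

lemma entryStar_entryInvo {N S : ℕ} {η : ℍ[ℝ]} (hη : star η = -η) (Q : Fin N → Fin S → ℍ[ℝ]) :
    entryStar (entryInvo η Q) = entryInvo η (entryStar Q) :=
  funext₂ fun n s => star_invo hη (Q n s)

lemma entryStar_entryStar {N S : ℕ} (Q : Fin N → Fin S → ℍ[ℝ]) : entryStar (entryStar Q) = Q :=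
  funext₂ fun n s => star_star (Q n s)

/-- **Linear independence of the differentials of the involutions** (Lemma 1):
if `A₁ vec(Q) + A₂ vec(Q^i) + A₃ vec(Q^j) + A₄ vec(Q^k) = 0` for all `Q`, then all `Aₙ = 0`;
likewise for the conjugate case. -/
theorem vec_involutions_independent {M N S : ℕ}
    (A₁ A₂ A₃ A₄ : Matrix (Fin M) (Fin N × Fin S) ℍ[ℝ]) :
    ((∀ Q : Fin N → Fin S → ℍ[ℝ],
        A₁.mulVec (vecM Q) + A₂.mulVec (vecM (entryInvo qI Q))
          + A₃.mulVec (vecM (entryInvo qJ Q)) + A₄.mulVec (vecM (entryInvo qK Q)) = 0) →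
      A₁ = 0 ∧ A₂ = 0 ∧ A₃ = 0 ∧ A₄ = 0)
    ∧
    ((∀ Q : Fin N → Fin S → ℍ[ℝ],
        A₁.mulVec (vecM (entryStar Q)) + A₂.mulVec (vecM (entryStar (entryInvo qI Q)))
          + A₃.mulVec (vecM (entryStar (entryInvo qJ Q)))
          + A₄.mulVec (vecM (entryStar (entryInvo qK Q))) = 0) →
      A₁ = 0 ∧ A₂ = 0 ∧ A₃ = 0 ∧ A₄ = 0) := by
  refine ⟨involutions_independent, fun h => involutions_independent fun Q => ?_⟩
  simpa only [entryStar_entryInvo star_qI, entryStar_entryInvo star_qJ, entryStar_entryInvo star_qK,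
    entryStar_entryStar] using h (entryStar Q)
end
end

section
/- Let F : ℍ^{N×S} → ℍ^{M×R} and G : ℍ^{N×S} → ℍ^{R×P} be ℝ-differentiable at Q ∈ ℍ^{N×S}, let H(Q) = F(Q)G(Q) (matrix product), and let μ ∈ ℍ, μ ≠ 0. Then the GHR Jacobian of H satisfies the product rule D_{Q^μ}H(Q) = (I_P ⊗ F(Q)) · D_{Q^μ}G(Q) + D_{Q^μ}F̃(Q), where F̃ is the function P ↦ F(P)·G(Q) with G held constant at its value at Q, and I_P ⊗ F(Q) is the Kronecker product, i.e. the MP × RP matrix with ((m,p),(r,p′)) entry equal to F(Q)_{mr} if p = p′ and 0 otherwise. -/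
open scoped Quaternion

noncomputable section

/-- The `N × S` quaternion matrix with entry `d` at position `(n,s)` and `0` elsewhere. -/
def single {N S : ℕ} (n : Fin N) (s : Fin S) (d : ℍ[ℝ]) : Fin N → Fin S → ℍ[ℝ] :=
  Pi.single n (Pi.single s d)

/-- Real directional (Fréchet) derivative of a scalar function of a matrix variable, in the
direction `d` at the single entry `(n,s)` (the other entries held fixed). -/
def pd {N S : ℕ} (f : (Fin N → Fin S → ℍ[ℝ]) → ℍ[ℝ]) (Q : Fin N → Fin S → ℍ[ℝ])
    (n : Fin N) (s : Fin S) (d : ℍ[ℝ]) : ℍ[ℝ] :=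
  fderiv ℝ f Q (single n s d)

/-- Left GHR derivative `∂f/∂q_{ns}^μ` of a scalar function `f` with respect to the entry
`q_{ns}` of its matrix argument:
`¼(∂f/∂q_a − (∂f/∂q_b) i^μ − (∂f/∂q_c) j^μ − (∂f/∂q_d) k^μ)`, with `x^μ = μ x μ⁻¹`. -/
def ghrE {N S : ℕ} (μ : ℍ[ℝ]) (f : (Fin N → Fin S → ℍ[ℝ]) → ℍ[ℝ])
    (Q : Fin N → Fin S → ℍ[ℝ]) (n : Fin N) (s : Fin S) : ℍ[ℝ] :=
  (1 / 4 : ℝ) • (pd f Q n s 1 - pd f Q n s qI * (μ * qI * μ⁻¹)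
    - pd f Q n s qJ * (μ * qJ * μ⁻¹) - pd f Q n s qK * (μ * qK * μ⁻¹))

/-- The GHR Jacobian `D_{Q^μ}F(Q)`: the `MP × NS` quaternion matrix whose `((m,p),(n,s))` entry
is the left GHR derivative `∂F_{mp}/∂q_{ns}^μ`. -/
def ghrJac {N S M P : ℕ} (μ : ℍ[ℝ])
    (F : (Fin N → Fin S → ℍ[ℝ]) → (Fin M → Fin P → ℍ[ℝ]))
    (Q : Fin N → Fin S → ℍ[ℝ]) : Matrix (Fin M × Fin P) (Fin N × Fin S) ℍ[ℝ] :=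
  Matrix.of fun mp ns => ghrE μ (fun X => F X mp.1 mp.2) Q ns.1 ns.2

/-- Quaternion matrix product. -/
def mmul {M R P : ℕ} (A : Fin M → Fin R → ℍ[ℝ]) (B : Fin R → Fin P → ℍ[ℝ]) :
    Fin M → Fin P → ℍ[ℝ] :=
  fun m p => ∑ r, A m r * B r p

/-- The Kronecker product `I_P ⊗ A`: the `MP × RP` matrix with `((m,p),(r,p′))` entry
`A_{mr}` if `p = p′` and `0` otherwise. -/
def kronIdLeft {M R : ℕ} (P : ℕ) (A : Fin M → Fin R → ℍ[ℝ]) :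
    Matrix (Fin M × Fin P) (Fin R × Fin P) ℍ[ℝ] :=
  Matrix.of fun mp rp => if mp.2 = rp.2 then A mp.1 rp.1 else 0

/-! Entrywise, `H_{mp} = ∑_r F_{mr} G_{rp}`. The GHR derivative is additive, and the Leibniz rule
for the real partial derivatives splits each term as `F_{mr}(Q) ∂G_{rp} + (∂F_{mr}) G_{rp}(Q)`;
the constant left factor `F_{mr}(Q)` pulls out of the GHR derivative because the conjugated units
`μ i μ⁻¹, μ j μ⁻¹, μ k μ⁻¹` multiply the partial derivatives from the right. -/

open Finset

section GHR

variable {N S : ℕ}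

lemma pd_mul {f g : (Fin N → Fin S → ℍ[ℝ]) → ℍ[ℝ]} {Q : Fin N → Fin S → ℍ[ℝ]}
    (hf : DifferentiableAt ℝ f Q) (hg : DifferentiableAt ℝ g Q) (n : Fin N) (s : Fin S)
    (d : ℍ[ℝ]) :
    pd (fun X => f X * g X) Q n s d = f Q * pd g Q n s d + pd f Q n s d * g Q := by
  simp [pd, fderiv_fun_mul' hf hg]

lemma pd_mul_const {f : (Fin N → Fin S → ℍ[ℝ]) → ℍ[ℝ]} {Q : Fin N → Fin S → ℍ[ℝ]}
    (hf : DifferentiableAt ℝ f Q) (c : ℍ[ℝ]) (n : Fin N) (s : Fin S) (d : ℍ[ℝ]) :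
    pd (fun X => f X * c) Q n s d = pd f Q n s d * c := by
  simpa [pd] using pd_mul hf (differentiableAt_const c) n s d

lemma pd_sum {ι : Type*} {t : Finset ι} {f : ι → (Fin N → Fin S → ℍ[ℝ]) → ℍ[ℝ]}
    {Q : Fin N → Fin S → ℍ[ℝ]} (hf : ∀ i ∈ t, DifferentiableAt ℝ (f i) Q) (n : Fin N)
    (s : Fin S) (d : ℍ[ℝ]) :
    pd (fun X => ∑ i ∈ t, f i X) Q n s d = ∑ i ∈ t, pd (f i) Q n s d := by
  simp [pd, fderiv_fun_sum hf]

lemma ghrE_mul (μ : ℍ[ℝ]) {f g : (Fin N → Fin S → ℍ[ℝ]) → ℍ[ℝ]} {Q : Fin N → Fin S → ℍ[ℝ]}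
    (hf : DifferentiableAt ℝ f Q) (hg : DifferentiableAt ℝ g Q) (n : Fin N) (s : Fin S) :
    ghrE μ (fun X => f X * g X) Q n s =
      f Q * ghrE μ g Q n s + ghrE μ (fun X => f X * g Q) Q n s := by
  simp only [ghrE, pd_mul hf hg, pd_mul_const hf, mul_sub, add_mul, mul_assoc, smul_sub,
    smul_add, mul_smul_comm]
  abel

lemma ghrE_sum (μ : ℍ[ℝ]) {ι : Type*} {t : Finset ι}
    {f : ι → (Fin N → Fin S → ℍ[ℝ]) → ℍ[ℝ]} {Q : Fin N → Fin S → ℍ[ℝ]}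
    (hf : ∀ i ∈ t, DifferentiableAt ℝ (f i) Q) (n : Fin N) (s : Fin S) :
    ghrE μ (fun X => ∑ i ∈ t, f i X) Q n s = ∑ i ∈ t, ghrE μ (f i) Q n s := by
  simp only [ghrE, pd_sum hf, sum_mul, ← sum_sub_distrib, smul_sum]

end GHR

lemma DifferentiableAt.matrix_entry {E : Type*} [NormedAddCommGroup E] [NormedSpace ℝ E]
    {M R : ℕ} {F : E → Fin M → Fin R → ℍ[ℝ]} {Q : E} (hF : DifferentiableAt ℝ F Q)
    (m : Fin M) (r : Fin R) : DifferentiableAt ℝ (fun X => F X m r) Q :=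
  differentiableAt_pi.mp (differentiableAt_pi.mp hF m) r

lemma kronIdLeft_mul_apply {K : Type*} {M R P : ℕ} (A : Fin M → Fin R → ℍ[ℝ])
    (B : Matrix (Fin R × Fin P) K ℍ[ℝ]) (m : Fin M) (p : Fin P) (k : K) :
    (kronIdLeft P A * B) (m, p) k = ∑ r, A m r * B (r, p) k := by
  simp [Matrix.mul_apply, kronIdLeft, Fintype.sum_prod_type]

theorem ghr_product_rule_general {N S M R P : ℕ} (μ : ℍ[ℝ])
    (F : (Fin N → Fin S → ℍ[ℝ]) → (Fin M → Fin R → ℍ[ℝ]))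
    (G : (Fin N → Fin S → ℍ[ℝ]) → (Fin R → Fin P → ℍ[ℝ]))
    (Q : Fin N → Fin S → ℍ[ℝ])
    (hF : DifferentiableAt ℝ F Q) (hG : DifferentiableAt ℝ G Q) :
    ghrJac μ (fun X => mmul (F X) (G X)) Q =
      kronIdLeft P (F Q) * ghrJac μ G Q + ghrJac μ (fun X => mmul (F X) (G Q)) Q := by
  refine Matrix.ext fun ⟨m, p⟩ ⟨n, s⟩ => ?_
  have hFG r : DifferentiableAt ℝ (fun X => F X m r * G X r p) Q :=
    (hF.matrix_entry m r).mul (hG.matrix_entry r p)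
  have hFGQ r : DifferentiableAt ℝ (fun X => F X m r * G Q r p) Q :=
    (hF.matrix_entry m r).mul_const _
  simp only [Matrix.add_apply, kronIdLeft_mul_apply, ghrJac, Matrix.of_apply, mmul,
    ghrE_sum μ (fun r _ => hFG r), ghrE_sum μ (fun r _ => hFGQ r),
    ghrE_mul μ (hF.matrix_entry m _) (hG.matrix_entry _ p), sum_add_distrib]

/-- **GHR matrix product rule** (Theorem 1, first identity):
`D_{Q^μ}(FG)(Q) = (I_P ⊗ F(Q)) D_{Q^μ}G(Q) + D_{Q^μ}(F·G(Q))(Q)`,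
the last Jacobian taken with `G` held constant at its value at `Q`. -/
theorem ghr_product_rule {N S M R P : ℕ} (μ : ℍ[ℝ]) (hμ : μ ≠ 0)
    (F : (Fin N → Fin S → ℍ[ℝ]) → (Fin M → Fin R → ℍ[ℝ]))
    (G : (Fin N → Fin S → ℍ[ℝ]) → (Fin R → Fin P → ℍ[ℝ]))
    (Q : Fin N → Fin S → ℍ[ℝ])
    (hF : DifferentiableAt ℝ F Q) (hG : DifferentiableAt ℝ G Q) :
    ghrJac μ (fun X => mmul (F X) (G X)) Q =
      kronIdLeft P (F Q) * ghrJac μ G Q + ghrJac μ (fun X => mmul (F X) (G Q)) Q :=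
  ghr_product_rule_general μ F G Q hF hG
end
end
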